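/- arXiv:1109.1529 — 2 statements merged into one kernel-verified Lean document; each statement's English description precedes it below -/
import Mathlib

section
/- The map σ is bijective, and σ ∘ σ ≠ id_{V⊗V}. -/
open TensorProduct

noncomputable section

/-- The 3-dimensional complex vector space with basis `ω 0 = ω₋`, `ω 1 = ω₊`, `ω 2 = ω_z`. -/
abbrev V : Type := Fin 3 → ℂ

/-- The distinguished basis `(ω₋, ω₊, ω_z)` of `V`. -/
def ω : Fin 3 → V := fun i => Pi.basisFun ℂ (Fin 3) i

/-- The basis `ω_a ⊗ ω_b` of `V ⊗ V`. -/
def basisVV : Module.Basis (Fin 3 × Fin 3) ℂ (V ⊗[ℂ] V) :=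
  (Pi.basisFun ℂ (Fin 3)).tensorProduct (Pi.basisFun ℂ (Fin 3))

/-- The values of the braiding `σ` on the basis vectors `ω_a ⊗ ω_b`
(first index `0 = −`, `1 = +`, `2 = z`). -/
def σval (q : ℝ) : Fin 3 → Fin 3 → V ⊗[ℂ] V :=
  ![![ω 0 ⊗ₜ[ℂ] ω 0,
     (1 - (q : ℂ) ^ 2) • (ω 0 ⊗ₜ[ℂ] ω 1) + ((q : ℂ) ^ 2)⁻¹ • (ω 1 ⊗ₜ[ℂ] ω 0),
     (1 - (q : ℂ) ^ 2) • (ω 0 ⊗ₜ[ℂ] ω 2) + ((q : ℂ) ^ 4)⁻¹ • (ω 2 ⊗ₜ[ℂ] ω 0)],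
    ![(q : ℂ) ^ 4 • (ω 0 ⊗ₜ[ℂ] ω 1),
      ω 1 ⊗ₜ[ℂ] ω 1,
      (q : ℂ) ^ 6 • (ω 2 ⊗ₜ[ℂ] ω 1)],
    ![(q : ℂ) ^ 6 • (ω 0 ⊗ₜ[ℂ] ω 2),
      (1 - (q : ℂ) ^ 2) • (ω 2 ⊗ₜ[ℂ] ω 1) + ((q : ℂ) ^ 4)⁻¹ • (ω 1 ⊗ₜ[ℂ] ω 2),
      ω 2 ⊗ₜ[ℂ] ω 2]]

/-- The braiding `σ` of Woronowicz's 3d left covariant calculus on `SU_q(2)`. -/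
def σmap (q : ℝ) : (V ⊗[ℂ] V) →ₗ[ℂ] (V ⊗[ℂ] V) :=
  basisVV.constr ℂ (fun p => σval q p.1 p.2)

/-!
`σ` maps each plane spanned by `ω_a ⊗ ω_b` and `ω_b ⊗ ω_a` to itself, and inverting these
`2 × 2` blocks gives an explicit right inverse `τ`; in finite dimension this makes `σ` bijective.
On the other hand `σ² (ω₋ ⊗ ω₊)` has coefficient `(1 - q²) / q²` on `ω₊ ⊗ ω₋`, which vanishes
only for `q² = 1`, where `σ` degenerates to the flip.
-/

theorem basisVV_apply (a b : Fin 3) : basisVV (a, b) = ω a ⊗ₜ[ℂ] ω b := by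
  simp [basisVV, Module.Basis.tensorProduct_apply', ω]

section Braiding

variable (q : ℝ)

theorem σmap_tmul (a b : Fin 3) : σmap q (ω a ⊗ₜ[ℂ] ω b) = σval q a b := by
  rw [σmap, ← basisVV_apply, Module.Basis.constr_basis]

def τval : Fin 3 → Fin 3 → V ⊗[ℂ] V :=
  ![![ω 0 ⊗ₜ[ℂ] ω 0,
     ((q : ℂ) ^ 4)⁻¹ • (ω 1 ⊗ₜ[ℂ] ω 0),
     ((q : ℂ) ^ 6)⁻¹ • (ω 2 ⊗ₜ[ℂ] ω 0)],
    ![(q : ℂ) ^ 2 • (ω 0 ⊗ₜ[ℂ] ω 1) - (((q : ℂ) ^ 2)⁻¹ * (1 - (q : ℂ) ^ 2)) • (ω 1 ⊗ₜ[ℂ] ω 0),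
      ω 1 ⊗ₜ[ℂ] ω 1,
      (q : ℂ) ^ 4 • (ω 2 ⊗ₜ[ℂ] ω 1) - (((q : ℂ) ^ 2)⁻¹ * (1 - (q : ℂ) ^ 2)) • (ω 1 ⊗ₜ[ℂ] ω 2)],
    ![(q : ℂ) ^ 4 • (ω 0 ⊗ₜ[ℂ] ω 2) - (((q : ℂ) ^ 2)⁻¹ * (1 - (q : ℂ) ^ 2)) • (ω 2 ⊗ₜ[ℂ] ω 0),
      ((q : ℂ) ^ 6)⁻¹ • (ω 1 ⊗ₜ[ℂ] ω 2),
      ω 2 ⊗ₜ[ℂ] ω 2]]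

def τmap : (V ⊗[ℂ] V) →ₗ[ℂ] (V ⊗[ℂ] V) :=
  basisVV.constr ℂ (fun p => τval q p.1 p.2)

theorem τmap_tmul (a b : Fin 3) : τmap q (ω a ⊗ₜ[ℂ] ω b) = τval q a b := by
  rw [τmap, ← basisVV_apply, Module.Basis.constr_basis]

variable {q}

theorem σmap_comp_τmap (hq : q ≠ 0) : σmap q ∘ₗ τmap q = LinearMap.id := by
  have hqC : (q : ℂ) ≠ 0 := Complex.ofReal_ne_zero.mpr hq
  refine basisVV.ext fun ⟨a, b⟩ => ?_
  rw [basisVV_apply]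
  fin_cases a <;> fin_cases b <;>
    simp [τmap_tmul, σval, τval, σmap_tmul] <;>
    match_scalars <;> field_simp <;> ring

theorem σmap_bijective (hq : q ≠ 0) : Function.Bijective (σmap q) := by
  have hsurj : Function.Surjective (σmap q) := fun x =>
    ⟨τmap q x, LinearMap.congr_fun (σmap_comp_τmap hq) x⟩
  exact ⟨LinearMap.injective_iff_surjective.mpr hsurj, hsurj⟩

theorem σmap_σmap_ω_minus_ω_plus (hq : q ≠ 0) :
    σmap q (σmap q (ω 0 ⊗ₜ[ℂ] ω 1)) =
      ((1 - (q : ℂ) ^ 2) ^ 2 + (q : ℂ) ^ 2) • (ω 0 ⊗ₜ[ℂ] ω 1) +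
        ((1 - (q : ℂ) ^ 2) * ((q : ℂ) ^ 2)⁻¹) • (ω 1 ⊗ₜ[ℂ] ω 0) := by
  have hqC : (q : ℂ) ≠ 0 := Complex.ofReal_ne_zero.mpr hq
  simp [σval, σmap_tmul]
  match_scalars <;> field_simp

theorem σmap_comp_σmap_ne_id (hq : q ≠ 0) (hq_sq : q ^ 2 ≠ 1) :
    σmap q ∘ₗ σmap q ≠ LinearMap.id := by
  intro h
  have h01 := LinearMap.congr_fun h (ω 0 ⊗ₜ[ℂ] ω 1)
  rw [LinearMap.comp_apply, σmap_σmap_ω_minus_ω_plus hq, LinearMap.id_apply,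
    ← basisVV_apply, ← basisVV_apply] at h01
  have hcoeff : 1 - (q : ℂ) ^ 2 = 0 := by
    simpa [Finsupp.single_apply, hq] using congrArg (fun x => basisVV.repr x (1, 0)) h01
  exact hq_sq (by exact_mod_cast (sub_eq_zero.mp hcoeff).symm)

end Braiding

/-- `σ` is bijective and `σ ∘ σ ≠ id`. -/
theorem sigma_bijective_and_not_involutive (q : ℝ) (hq0 : 0 < q) (hq1 : q < 1) :
    Function.Bijective (σmap q) ∧
      σmap q ∘ₗ σmap q ≠ (LinearMap.id : (V ⊗[ℂ] V) →ₗ[ℂ] (V ⊗[ℂ] V)) :=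
  ⟨σmap_bijective hq0.ne', σmap_comp_σmap_ne_id hq0.ne' (by nlinarith)⟩

end
end

section
/- Classical degeneracy of the square of the Hodge operator: if g is symmetric on W (i.e. g(φ, φ′) = g(φ′, φ) for all φ, φ′ ∈ W), then for every k with 0 ≤ k ≤ N and every φ ∈ ΛᵏW, T(T(φ)) = (−1)^{k(N−k)} · T(T(1)) · φ, where T(T(1)) ∈ Λ⁰W = ℂ is a scalar. -/
/-!
Since `g` is symmetric it has an orthogonal basis `f`. For the monomials `f_s` (`s ⊆ Fin N`)
the Gram determinant `G(f_t, f_s)` vanishes unless `t = s`, so pairing `T f_s` against all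
`f_t` forces `T f_s = c_s f_{sᶜ}` with `c_s = m d ε_s ∏_{i ∈ s} g(f_i, f_i)`, where
`f_s ∧ f_{sᶜ} = ε_s f_univ` and `ω¹ ∧ ⋯ ∧ ω^N = d f_univ`. Thus `T (T f_s) = c_s c_{sᶜ} f_s`,
and graded commutativity, `ε_{sᶜ} = (-1)^{k(N-k)} ε_s`, turns `c_s c_{sᶜ}` into
`(-1)^{k(N-k)} c_∅ c_univ`, where `c_∅ c_univ` is the scalar `T (T 1)`.
-/

noncomputable section

/-- The `N`-dimensional complex vector space `W` with basis `(ω¹, …, ω^N)`. -/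
abbrev W (N : ℕ) : Type := Fin N → ℂ

/-- The distinguished basis `(ω¹, …, ω^N)` of `W`. -/
def e (N : ℕ) : Fin N → W N := fun i => Pi.basisFun ℂ (Fin N) i

/-- The full exterior algebra `ΛW`. -/
abbrev E (N : ℕ) : Type := ExteriorAlgebra ℂ (W N)

/-- The `k`-th exterior power `ΛᵏW`, as a submodule of `ΛW`. -/
def degE (N k : ℕ) : Submodule ℂ (E N) :=
  (LinearMap.range (ExteriorAlgebra.ι ℂ : W N →ₗ[ℂ] E N)) ^ k

/-- The basis monomial `ω^{a 0} ∧ ⋯ ∧ ω^{a (k-1)} ∈ ΛᵏW`. -/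
def mono (N : ℕ) {k : ℕ} (a : Fin k → Fin N) : E N :=
  (List.ofFn fun j => ExteriorAlgebra.ι ℂ (e N (a j))).prod

/-- `HodgeData N g G st m T` packages the classical data: a nondegenerate bilinear form
`g` on `W`, its extensions `G k` to the exterior powers `ΛᵏW` (via the permutation-sum
formula), the antilinear involution `st` of `ΛW` fixing every basis monomial, the volume
form `μ = m ω¹∧⋯∧ω^N`, and the operator `T` defined by
`φ* ∧ T(φ′) = (1/k!) G k (φ*, φ′) μ`, sending `ΛᵏW` into `Λ^{N−k}W`. -/
structure HodgeData (N : ℕ) (g : W N →ₗ[ℂ] W N →ₗ[ℂ] ℂ)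
    (G : ℕ → (E N →ₗ[ℂ] E N →ₗ[ℂ] ℂ)) (st : E N →ₛₗ[starRingEnd ℂ] E N)
    (m : ℂ) (T : E N →ₗ[ℂ] E N) : Prop where
  nondeg : LinearMap.BilinForm.Nondegenerate g
  m_ne : m ≠ 0
  hG : ∀ (k : ℕ) (a b : Fin k → Fin N),
    G k (mono N a) (mono N b) =
      ∑ π : Equiv.Perm (Fin k), ∑ π' : Equiv.Perm (Fin k),
        (((Equiv.Perm.sign π : ℤ) * (Equiv.Perm.sign π' : ℤ) : ℤ) : ℂ) *
          ∏ j : Fin k, g (e N (a (π j))) (e N (b (π' j)))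
  hst : ∀ (k : ℕ) (a : Fin k → Fin N), st (mono N a) = mono N a
  hTdeg : ∀ k : ℕ, ∀ φ ∈ degE N k, T φ ∈ degE N (N - k)
  hTdef : ∀ k : ℕ, ∀ φ ∈ degE N k, ∀ φ' ∈ degE N k,
    st φ * T φ' =
      (((k.factorial : ℂ))⁻¹ * G k (st φ) φ') • (m • mono N (fun j : Fin N => j))

namespace Matrix

open Equiv Nat

variable {R n : Type*} [CommRing R] [Fintype n] [DecidableEq n]

theorem sum_perm_sum_perm_sign_mul_prod (A : Matrix n n R) :
    ∑ π : Perm n, ∑ π' : Perm n,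
        (((Perm.sign π : ℤ) * (Perm.sign π' : ℤ) : ℤ) : R) * ∏ j, A (π j) (π' j) =
      (Fintype.card n)! * A.det := by
  have inner : ∀ π : Perm n,
      ∑ π' : Perm n, (((Perm.sign π : ℤ) * (Perm.sign π' : ℤ) : ℤ) : R) * ∏ j, A (π j) (π' j) =
        A.det := by
    intro π
    have hrow : (Perm.sign π : ℤ) * A.det =
        ∑ σ : Perm n, (Perm.sign σ : ℤ) * ∏ i, A (π i) (σ i) := by
      rw [← det_permute, ← det_transpose, det_apply']
      rfl
    have hsq : ((Perm.sign π : ℤ) : R) * (Perm.sign π : ℤ) = 1 := by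
      rw [← Int.cast_mul, ← Units.val_mul, Int.units_mul_self, Units.val_one, Int.cast_one]
    simp only [Int.cast_mul, mul_assoc, ← Finset.mul_sum]
    rw [← hrow, ← mul_assoc, hsq, one_mul]
  rw [Finset.sum_congr rfl fun π _ => inner π, Finset.sum_const, Finset.card_univ,
    Fintype.card_perm, nsmul_eq_mul]

end Matrix

namespace ExteriorAlgebra

variable {R M : Type*} [CommRing R] [AddCommGroup M] [Module R M]

theorem ι_mul_ιMulti_comm {k : ℕ} (x : M) (v : Fin k → M) :
    ι R x * ιMulti R k v = (-1 : R) ^ k • (ιMulti R k v * ι R x) := by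
  induction k with
  | zero => simp
  | succ k ih =>
    have hswap : ι R x * ι R (v 0) = -(ι R (v 0) * ι R x) :=
      eq_neg_of_add_eq_zero_left (ι_add_mul_swap x (v 0))
    rw [ιMulti_succ_apply, ← mul_assoc, hswap, neg_mul, mul_assoc, ih, mul_smul_comm,
      pow_succ, mul_neg_one, neg_smul, mul_assoc]

theorem ιMulti_mul_ιMulti_comm {k l : ℕ} (v : Fin k → M) (w : Fin l → M) :
    ιMulti R k v * ιMulti R l w = (-1 : R) ^ (k * l) • (ιMulti R l w * ιMulti R k v) := by
  induction k with
  | zero => simp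
  | succ k ih =>
    rw [ιMulti_succ_apply, mul_assoc, ih, mul_smul_comm, ← mul_assoc, ι_mul_ιMulti_comm,
      smul_mul_assoc, smul_smul, mul_assoc, ← pow_add, Nat.succ_mul]

open Nat in
theorem apply_ιMulti_ιMulti_eq_factorial_mul_det {I : Type*} (b : Module.Basis I R M)
    (g : M →ₗ[R] M →ₗ[R] R) (G : ExteriorAlgebra R M →ₗ[R] ExteriorAlgebra R M →ₗ[R] R) {k : ℕ}
    (hG : ∀ a c : Fin k → I, G (ιMulti R k (b ∘ a)) (ιMulti R k (b ∘ c)) =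
      k ! * (Matrix.of fun i j => g (b (a i)) (b (c j))).det)
    (v w : Fin k → M) :
    G (ιMulti R k v) (ιMulti R k w) = k ! * (Matrix.of fun i j => g (v i) (w j)).det := by
  have hleft : ∀ a : Fin k → I,
      (G (ιMulti R k (b ∘ a))).compAlternatingMap (ιMulti R k) =
        (k ! : R) • Matrix.detRowAlternating.compLinearMap
          (LinearMap.pi fun i => g (b (a i))) := by
    intro a
    refine b.ext_alternating fun c _ => ?_
    simp only [AlternatingMap.smul_apply, LinearMap.compAlternatingMap_apply,
      AlternatingMap.compLinearMap_apply, smul_eq_mul]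
    exact (hG a c).trans (congrArg (_ * ·) (Matrix.det_transpose _).symm)
  have hright : ∀ w : Fin k → M,
      (G.flip (ιMulti R k w)).compAlternatingMap (ιMulti R k) =
        (k ! : R) • Matrix.detRowAlternating.compLinearMap
          (LinearMap.pi fun j => g.flip (w j)) := by
    intro w
    refine b.ext_alternating fun a _ => ?_
    have := congr($(hleft a) w)
    simp only [AlternatingMap.smul_apply, LinearMap.compAlternatingMap_apply,
      AlternatingMap.compLinearMap_apply, smul_eq_mul] at this ⊢
    exact this.trans (congrArg (_ * ·) (Matrix.det_transpose _).symm)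
  have := congr($(hright w) v)
  simp only [AlternatingMap.smul_apply, LinearMap.compAlternatingMap_apply,
    AlternatingMap.compLinearMap_apply, smul_eq_mul] at this
  exact this

open Set Set.powersetCard

variable {I : Type*} [LinearOrder I] (b : Module.Basis I R M)

theorem basis_mem_exteriorPower (s : Finset I) :
    b.ExteriorAlgebra s ∈ ⋀[R]^s.card M := by
  rw [basis_apply_ofCard b (rfl : s.card = s.card)]
  exact ιMulti_range R _ ⟨_, rfl⟩

theorem basis_empty : b.ExteriorAlgebra ∅ = 1 := by
  rw [basis_apply_ofCard b (rfl : (∅ : Finset I).card = 0)]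
  exact ιMulti_zero_apply _

theorem span_basis_powersetCard (n : ℕ) :
    Submodule.span R (range fun s : powersetCard I n => b.ExteriorAlgebra s) = ⋀[R]^n M := by
  simp_rw [basis_apply_powersetCard]
  exact exteriorPower.ιMulti_family_span_fixedDegree_of_span R b.span_eq

theorem basis_mul_basis_comm (s t : Finset I) :
    b.ExteriorAlgebra s * b.ExteriorAlgebra t =
      (-1 : R) ^ (s.card * t.card) • (b.ExteriorAlgebra t * b.ExteriorAlgebra s) := by
  simp only [basis_apply_ofCard b rfl]
  exact ιMulti_mul_ιMulti_comm _ _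

theorem basis_mul_eq_zero_of_not_disjoint {s t : Finset I} (h : ¬Disjoint s t) :
    b.ExteriorAlgebra s * b.ExteriorAlgebra t = 0 :=
  basis_mul_of_not_disjoint b (ofCard rfl) (ofCard rfl) h

open Nat in
theorem apply_basis_basis_of_isOrthoᵢ {g : M →ₗ[R] M →ₗ[R] R} (hb : g.IsOrthoᵢ b)
    {G : ExteriorAlgebra R M →ₗ[R] ExteriorAlgebra R M →ₗ[R] R} {k : ℕ}
    (hG : ∀ v w : Fin k → M,
      G (ιMulti R k v) (ιMulti R k w) = k ! * (Matrix.of fun i j => g (v i) (w j)).det)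
    {u s : Finset I} (hu : u.card = k) (hs : s.card = k) :
    G (b.ExteriorAlgebra u) (b.ExteriorAlgebra s) =
      if u = s then k ! * ∏ i ∈ s, g (b i) (b i) else 0 := by
  rw [basis_apply_ofCard b hu, basis_apply_ofCard b hs, hG]
  simp only [Function.comp_apply, ofFinEmbEquiv_symm_apply, val_ofCard]
  split_ifs with hus
  · subst hus
    have hdiag : (Matrix.of fun i j => g (b (u.orderEmbOfFin hu i)) (b (u.orderEmbOfFin hu j))) =
        Matrix.diagonal fun i => g (b (u.orderEmbOfFin hu i)) (b (u.orderEmbOfFin hu i)) := by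
      ext i j
      by_cases hij : i = j
      · subst hij; simp
      · simp [hij, hb ((u.orderEmbOfFin hu).injective.ne hij)]
    rw [hdiag, Matrix.det_diagonal]
    conv_rhs => rw [← u.image_orderEmbOfFin_univ hu]
    rw [Finset.prod_image fun i _ j _ h => (u.orderEmbOfFin hu).injective h]
  · obtain ⟨x, hxu, hxs⟩ : ∃ x ∈ u, x ∉ s := by
      by_contra! hsub
      exact hus (Finset.eq_of_subset_of_card_le hsub (by rw [hu, hs]))
    obtain ⟨i, rfl⟩ : x ∈ Set.range (u.orderEmbOfFin hu) := by
      rwa [u.range_orderEmbOfFin hu]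
    rw [Matrix.det_eq_zero_of_row_eq_zero i fun j =>
      hb fun h => hxs (by rw [h]; exact s.orderEmbOfFin_mem hs j), mul_zero]

variable [Fintype I]

theorem sum_repr_exteriorPower {n : ℕ} {z : ExteriorAlgebra R M} (hz : z ∈ ⋀[R]^n M) :
    ∑ s, (b.exteriorPower n).repr ⟨z, hz⟩ s • b.ExteriorAlgebra s = z := by
  simp_rw [basis_eq_coe_basis]
  simpa using congrArg Subtype.val ((b.exteriorPower n).sum_repr ⟨z, hz⟩)

theorem exists_eq_smul_basis_univ {z : ExteriorAlgebra R M}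
    (hz : z ∈ ⋀[R]^(Fintype.card I) M) : ∃ d : R, z = d • b.ExteriorAlgebra Finset.univ := by
  refine ⟨∑ s, (b.exteriorPower _).repr ⟨z, hz⟩ s, ?_⟩
  conv_lhs => rw [← sum_repr_exteriorPower b hz]
  rw [Finset.sum_smul]
  refine Finset.sum_congr rfl fun s _ => ?_
  rw [Finset.eq_univ_of_card (s : Finset I) (card_eq s)]

def complSign (s : Finset I) : ℤˣ :=
  Equiv.Perm.sign
    (permOfDisjoint (s := ofCard rfl) (t := ofCard rfl) (disjoint_compl_right (a := s)))

theorem complSign_sq (s : Finset I) : ((complSign s : ℤ) : R) ^ 2 = 1 := by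
  rw [← Int.cast_pow, ← Units.val_pow_eq_pow_val, Int.units_sq, Units.val_one, Int.cast_one]

theorem basis_mul_basis_compl (s : Finset I) :
    b.ExteriorAlgebra s * b.ExteriorAlgebra sᶜ =
      ((complSign s : ℤ) : R) • b.ExteriorAlgebra Finset.univ := by
  rw [Int.cast_smul_eq_zsmul, ← Units.smul_def]
  refine (basis_mul_of_disjoint b (ofCard rfl) (ofCard rfl) disjoint_compl_right).trans ?_
  congr 2
  exact (s.disjUnion_eq_union sᶜ disjoint_compl_right).trans s.union_compl

theorem complSign_compl (s : Finset I) :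
    complSign sᶜ = (-1) ^ (sᶜ.card * s.card) * complSign s := by
  let b := Pi.basisFun ℤ I
  have h := basis_mul_basis_compl b sᶜ
  rw [compl_compl, basis_mul_basis_comm, basis_mul_basis_compl, smul_smul] at h
  have := congrArg (fun x => b.ExteriorAlgebra.repr x Finset.univ) h.symm
  simp only [map_smul, Finsupp.smul_apply, Module.Basis.repr_self, Finsupp.single_eq_same,
    smul_eq_mul, mul_one, Int.cast_id] at this
  exact Units.ext (by push_cast; exact this)

theorem eq_zero_of_forall_basis_compl_mul_eq_zero {n : ℕ}
    {z : ExteriorAlgebra R M} (hz : z ∈ ⋀[R]^n M)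
    (h : ∀ t : Finset I, t.card = n → b.ExteriorAlgebra tᶜ * z = 0) : z = 0 := by
  rw [← sum_repr_exteriorPower b hz]
  refine Finset.sum_eq_zero fun t _ => ?_
  have ht := h t (card_eq t)
  rw [← sum_repr_exteriorPower b hz, Finset.mul_sum,
    Finset.sum_eq_single t (fun v _ hvt => ?_) (fun h => absurd (Finset.mem_univ t) h),
    mul_smul_comm] at ht
  · have hunit : IsUnit ((complSign (t : Finset I)ᶜ : ℤ) : R) :=
      (complSign _).isUnit.map (Int.castRingHom R)
    have hprod := basis_mul_basis_compl b (t : Finset I)ᶜ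
    rw [compl_compl] at hprod
    rw [hprod, smul_smul] at ht
    have := congrArg (fun x => b.ExteriorAlgebra.repr x Finset.univ) ht
    simp only [map_smul, Finsupp.smul_apply, Module.Basis.repr_self, Finsupp.single_eq_same,
      smul_eq_mul, mul_one, map_zero, Finsupp.zero_apply] at this
    rw [hunit.mul_left_eq_zero.1 this, zero_smul]
  · rw [mul_smul_comm, basis_mul_eq_zero_of_not_disjoint b, smul_zero]
    rw [disjoint_compl_left_iff]
    exact fun hvt' => hvt (Subtype.ext (Finset.eq_of_subset_of_card_le hvt' (by simp [card_eq])))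

end ExteriorAlgebra

theorem LinearMap.BilinForm.exists_isOrthoᵢ_basis {K V : Type*} [Field K] [Invertible (2 : K)]
    [AddCommGroup V] [Module K V] [FiniteDimensional K V] {N : ℕ} (hN : Module.finrank K V = N)
    {g : LinearMap.BilinForm K V} (hg : LinearMap.IsSymm g) :
    ∃ f : Module.Basis (Fin N) K V, g.IsOrthoᵢ f := by
  obtain ⟨v, hv⟩ := LinearMap.BilinForm.exists_orthogonal_basis hg
  refine ⟨v.reindex (finCongr hN), fun i j hij => ?_⟩
  change g _ _ = 0
  rw [Module.Basis.reindex_apply, Module.Basis.reindex_apply]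
  exact hv ((finCongr hN).symm.injective.ne hij)

theorem mono_mem_degE {N k : ℕ} (a : Fin k → Fin N) : mono N a ∈ degE N k :=
  ExteriorAlgebra.ιMulti_range ℂ k ⟨_, rfl⟩

namespace HodgeData

open ExteriorAlgebra Nat

variable {N : ℕ} {g : W N →ₗ[ℂ] W N →ₗ[ℂ] ℂ} {G : ℕ → (E N →ₗ[ℂ] E N →ₗ[ℂ] ℂ)}
  {st : E N →ₛₗ[starRingEnd ℂ] E N} {m : ℂ} {T : E N →ₗ[ℂ] E N}

theorem G_ιMulti_ιMulti (H : HodgeData N g G st m T) (k : ℕ) (v w : Fin k → W N) :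
    G k (ιMulti ℂ k v) (ιMulti ℂ k w) = k ! * (Matrix.of fun i j => g (v i) (w j)).det := by
  refine apply_ιMulti_ιMulti_eq_factorial_mul_det (Pi.basisFun ℂ (Fin N)) g (G k)
    (fun a c => ?_) v w
  have := (H.hG k a c).trans (Matrix.sum_perm_sum_perm_sign_mul_prod
    (Matrix.of fun i j => g (e N (a i)) (e N (c j))))
  rwa [Fintype.card_fin] at this

theorem mul_T_eq (H : HodgeData N g G st m T) {k : ℕ} {x φ' : E N} (hx : x ∈ degE N k)
    (hφ' : φ' ∈ degE N k) :
    x * T φ' = ((k ! : ℂ)⁻¹ * G k x φ') • m • mono N (fun j : Fin N => j) := by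
  have hmono : Set.EqOn (LinearMap.mulRight ℂ (T φ'))
      (((k ! : ℂ)⁻¹ • (G k).flip φ').smulRight (m • mono N (fun j : Fin N => j)))
      (Set.range fun s : Set.powersetCard (Fin N) k =>
        (Pi.basisFun ℂ (Fin N)).ExteriorAlgebra s) := by
    rintro _ ⟨s, rfl⟩
    have hs : (Pi.basisFun ℂ (Fin N)).ExteriorAlgebra s =
        mono N (Set.powersetCard.ofFinEmbEquiv.symm s) :=
      basis_apply_powersetCard _ s
    have h := H.hTdef k _ (mono_mem_degE (Set.powersetCard.ofFinEmbEquiv.symm s)) φ' hφ'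
    rw [H.hst] at h
    simp [hs, h]
  simpa using LinearMap.eqOn_span' hmono (by rwa [span_basis_powersetCard] : x ∈ _)

theorem T_basis (H : HodgeData N g G st m T) {f : Module.Basis (Fin N) ℂ (W N)}
    (hf : g.IsOrthoᵢ f) {d : ℂ} (hd : mono N (fun j : Fin N => j) = d • f.ExteriorAlgebra .univ)
    (s : Finset (Fin N)) :
    T (f.ExteriorAlgebra s) =
      (m * d * (complSign s : ℤ) * ∏ i ∈ s, g (f i) (f i)) • f.ExteriorAlgebra sᶜ := by
  have hcard : sᶜ.card = N - s.card := by rw [Finset.card_compl, Fintype.card_fin]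
  refine sub_eq_zero.1 (eq_zero_of_forall_basis_compl_mul_eq_zero f (n := N - s.card) ?_
    fun t ht => ?_)
  · exact Submodule.sub_mem _ (H.hTdeg _ _ (basis_mem_exteriorPower f s))
      (Submodule.smul_mem _ _ (hcard ▸ basis_mem_exteriorPower f sᶜ))
  have htc : tᶜ.card = s.card := by
    rw [Finset.card_compl, Fintype.card_fin, ht,
      Nat.sub_sub_self (s.card_le_univ.trans_eq (Fintype.card_fin N))]
  rw [mul_sub, mul_smul_comm, H.mul_T_eq (htc ▸ basis_mem_exteriorPower f tᶜ)
    (basis_mem_exteriorPower f s),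
    apply_basis_basis_of_isOrthoᵢ f hf (H.G_ιMulti_ιMulti _) htc rfl]
  split_ifs with hts
  · rw [hts, basis_mul_basis_compl, hd, smul_smul, smul_smul, smul_smul, ← sub_smul]
    have hfac : (s.card ! : ℂ) ≠ 0 := Nat.cast_ne_zero.2 s.card.factorial_ne_zero
    have hε := complSign_sq (R := ℂ) s
    convert zero_smul ℂ (f.ExteriorAlgebra .univ) using 2
    rw [inv_mul_cancel_left₀ hfac]
    linear_combination (-(m * d * ∏ i ∈ s, g (f i) (f i))) * hε
  · rw [basis_mul_eq_zero_of_not_disjoint f, mul_zero, zero_smul, smul_zero, sub_zero]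
    rw [disjoint_compl_right_iff]
    exact fun h => hts (Finset.eq_of_subset_of_card_le h (by rw [htc]))

theorem T_T_basis (H : HodgeData N g G st m T) {f : Module.Basis (Fin N) ℂ (W N)}
    (hf : g.IsOrthoᵢ f) {d : ℂ} (hd : mono N (fun j : Fin N => j) = d • f.ExteriorAlgebra .univ)
    (s : Finset (Fin N)) :
    T (T (f.ExteriorAlgebra s)) =
      ((-1 : ℂ) ^ (s.card * (N - s.card)) * ((m * d) ^ 2 * ∏ i, g (f i) (f i))) •
        f.ExteriorAlgebra s := by
  rw [H.T_basis hf hd, map_smul, H.T_basis hf hd, compl_compl, smul_smul, complSign_compl,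
    Finset.card_compl, Fintype.card_fin, ← Finset.prod_mul_prod_compl s]
  congr 1
  push_cast
  linear_combination (-1 : ℂ) ^ (s.card * (N - s.card)) * (m * d) ^ 2 *
    (∏ i ∈ s, g (f i) (f i)) * (∏ i ∈ sᶜ, g (f i) (f i)) * complSign_sq (R := ℂ) s

end HodgeData

theorem classical_hodge_square_general (N : ℕ)
    (g : W N →ₗ[ℂ] W N →ₗ[ℂ] ℂ) (G : ℕ → (E N →ₗ[ℂ] E N →ₗ[ℂ] ℂ))
    (st : E N →ₛₗ[starRingEnd ℂ] E N) (m : ℂ) (T : E N →ₗ[ℂ] E N)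
    (H : HodgeData N g G st m T)
    (hsymm : ∀ v w : W N, g v w = g w v) :
    ∀ k : ℕ, k ≤ N → ∀ φ ∈ degE N k,
      T (T φ) = ((-1 : ℂ)) ^ (k * (N - k)) • (T (T 1) * φ) := by
  intro k _ φ hφ
  obtain ⟨f, hf⟩ := LinearMap.BilinForm.exists_isOrthoᵢ_basis (Module.finrank_fin_fun ℂ)
    (⟨hsymm⟩ : LinearMap.IsSymm g)
  obtain ⟨d, hd⟩ := ExteriorAlgebra.exists_eq_smul_basis_univ f
    (z := mono N fun j : Fin N => j) (by rw [Fintype.card_fin]; exact mono_mem_degE _)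
  have hT1 : T (T 1) = ((m * d) ^ 2 * ∏ i, g (f i) (f i)) • 1 := by
    simpa [ExteriorAlgebra.basis_empty] using H.T_T_basis hf hd ∅
  have hbasis : Set.EqOn (T ∘ₗ T)
      ((-1 : ℂ) ^ (k * (N - k)) • LinearMap.mulLeft ℂ (T (T 1)) : E N →ₗ[ℂ] E N)
      (Set.range fun s : Set.powersetCard (Fin N) k => f.ExteriorAlgebra s) := by
    rintro _ ⟨s, rfl⟩
    simp [H.T_T_basis hf hd, Set.powersetCard.card_eq s, hT1, smul_smul]
  simpa using LinearMap.eqOn_span' hbasis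
    (by rwa [ExteriorAlgebra.span_basis_powersetCard] : φ ∈ _)

/-- if `g` is symmetric on `W`, then for every `0 ≤ k ≤ N` and `φ ∈ ΛᵏW`,
`T(T(φ)) = (−1)^{k(N−k)} T(T(1)) φ` (where `T(T(1)) ∈ Λ⁰W = ℂ`). -/
theorem classical_hodge_square (N : ℕ) (hN : 1 ≤ N)
    (g : W N →ₗ[ℂ] W N →ₗ[ℂ] ℂ) (G : ℕ → (E N →ₗ[ℂ] E N →ₗ[ℂ] ℂ))
    (st : E N →ₛₗ[starRingEnd ℂ] E N) (m : ℂ) (T : E N →ₗ[ℂ] E N)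
    (H : HodgeData N g G st m T)
    (hsymm : ∀ v w : W N, g v w = g w v) :
    ∀ k : ℕ, k ≤ N → ∀ φ ∈ degE N k,
      T (T φ) = ((-1 : ℂ)) ^ (k * (N - k)) • (T (T 1) * φ) :=
  classical_hodge_square_general N g G st m T H hsymm

end
end
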